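/- Let G be a finite group, B ≤ G, and T ≤ B with U ≤ B such that B = TU, U normal in B, T ∩ U = 1, and suppose T acts transitively by conjugation on the nontrivial characters of the abelian group U. Let ψ be a nontrivial character of U and define Φ : F(G/T) → Ind_U^G ψ by Φ(f)(g) = ∑_{u∈U} f(gu) ψ(u)⁻¹, where F(G/T) is the space of right-T-invariant functions on G. Then Ker Φ = F(G/B), the space of right-B-invariant functions. -/
import Mathlib


open scoped BigOperators

/-- Fourier inversion: if all nontrivial Fourier coefficients of a function on a
finite abelian group vanish, the function is constant. -/
lemma aux_const_of_char_sums {A : Type*} [CommGroup A] [Fintype A]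
    (F : A → ℂ)
    (h : ∀ χ : A →* ℂˣ, χ ≠ 1 → ∑ a : A, F a * ((χ a)⁻¹ : ℂˣ) = 0) :
    ∀ a : A, F a = F 1 := by
  classical
  haveI : NeZero ((Monoid.exponent A : ℂ)) :=
    ⟨by exact_mod_cast Monoid.exponent_ne_zero_of_finite⟩
  obtain ⟨e⟩ := CommGroup.monoidHom_mulEquiv_of_hasEnoughRootsOfUnity A ℂ
  letI : Fintype (A →* ℂˣ) := Fintype.ofEquiv A e.toEquiv.symm
  have hcard : Fintype.card (A →* ℂˣ) = Fintype.card A := Fintype.card_congr e.toEquiv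
  -- second orthogonality
  have horth : ∀ c : A, ∑ χ : A →* ℂˣ, ((χ c : ℂ))
      = if c = 1 then (Fintype.card A : ℂ) else 0 := by
    intro c
    split_ifs with hc
    · subst hc
      simp [hcard]
    · obtain ⟨φ, hφ⟩ := CommGroup.exists_apply_ne_one_of_hasEnoughRootsOfUnity A ℂ hc
      let f₀ : (A →* ℂˣ) →* ℂ :=
        { toFun := fun χ => ((χ c : ℂˣ) : ℂ)
          map_one' := by simp
          map_mul' := fun χ₁ χ₂ => by simp }
      have hf₀ : f₀ ≠ 1 := by
        intro heq
        apply hφ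
        have : f₀ φ = 1 := by rw [heq]; rfl
        exact Units.ext this
      exact sum_hom_units_eq_zero f₀ hf₀
  have key : ∀ a : A, (Fintype.card A : ℂ) * F a = ∑ b : A, F b := by
    intro a
    have h1 : ∑ χ : A →* ℂˣ, ((χ a : ℂ)) * ∑ b : A, F b * ((χ b)⁻¹ : ℂˣ)
        = ∑ b : A, F b := by
      rw [Finset.sum_eq_single (1 : A →* ℂˣ)]
      · simp
      · intro χ _ hχ; rw [h χ hχ, mul_zero]
      · intro h1; exact absurd (Finset.mem_univ _) h1
    have h2 : ∑ χ : A →* ℂˣ, ((χ a : ℂ)) * ∑ b : A, F b * ((χ b)⁻¹ : ℂˣ)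
        = ∑ b : A, F b * ∑ χ : A →* ℂˣ, ((χ (a * b⁻¹) : ℂ)) := by
      simp_rw [Finset.mul_sum]
      rw [Finset.sum_comm]
      refine Finset.sum_congr rfl fun b _ => Finset.sum_congr rfl fun χ _ => ?_
      have : (χ (a * b⁻¹) : ℂ) = (χ a : ℂ) * ((χ b)⁻¹ : ℂˣ) := by
        rw [map_mul, map_inv]
        push_cast
        ring
      rw [this]; ring
    rw [h2] at h1
    rw [← h1]
    rw [Finset.sum_eq_single a]
    · rw [mul_inv_cancel, horth, if_pos rfl]; ring
    · intro b _ hb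
      rw [horth, if_neg, mul_zero]
      exact fun hab => hb (mul_inv_eq_one.mp hab).symm
    · intro h1; exact absurd (Finset.mem_univ _) h1
  intro a
  have hc0 : (Fintype.card A : ℂ) ≠ 0 := by
    exact_mod_cast Fintype.card_ne_zero
  have := (key a).trans (key 1).symm
  exact mul_left_cancel₀ hc0 this

/-- Let `G` be a finite group, `B = TU` with `U` normal in `B`, `T ∩ U = 1`, `U`
abelian, and suppose `T` acts transitively by conjugation on the nontrivial characters
of `U`. Fix a nontrivial character `ψ` of `U` and set
`Φ(f)(g) = ∑_{u ∈ U} f(gu) ψ(u)⁻¹` on the space of right-`T`-invariant functions on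
`G`. Then `Ker Φ` is exactly the space of right-`B`-invariant functions. -/
theorem kernel_of_induction_map (G : Type*) [Group G] [Fintype G]
    (B T U : Subgroup G) [Fintype U]
    (hTB : T ≤ B) (hUB : U ≤ B)
    (hBTU : ∀ b ∈ B, ∃ t ∈ T, ∃ u ∈ U, b = t * u)
    (hUnormal : ∀ b ∈ B, ∀ u ∈ U, b⁻¹ * u * b ∈ U)
    (hTU : T ⊓ U = ⊥)
    (hUab : ∀ u ∈ U, ∀ v ∈ U, u * v = v * u)
    (hconj : ∀ t ∈ T, ∀ u ∈ U, t⁻¹ * u * t ∈ U)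
    (htrans : ∀ ψ₁ ψ₂ : U →* ℂˣ, ψ₁ ≠ 1 → ψ₂ ≠ 1 →
      ∃ t, ∃ ht : t ∈ T, ∀ u : U, ψ₂ u = ψ₁ ⟨t⁻¹ * u * t, hconj t ht u u.2⟩)
    (ψ : U →* ℂˣ) (hψ : ψ ≠ 1)
    (f : G → ℂ) (hf : ∀ (g : G), ∀ t ∈ T, f (g * t) = f g) :
    (∀ g : G, ∑ u : U, f (g * u) * ((ψ u)⁻¹ : ℂˣ) = 0) ↔
      ∀ (g : G), ∀ b ∈ B, f (g * b) = f g := by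
  classical
  constructor
  · intro h g b hb
    letI : CommGroup U :=
      { (inferInstance : Group U) with
        mul_comm := fun a b => Subtype.ext (hUab a a.2 b b.2) }
    -- main claim: f is right-U-invariant
    have claim : ∀ g : G, ∀ v : U, f (g * v) = f g := by
      intro g v
      have hchar : ∀ χ : U →* ℂˣ, χ ≠ 1 →
          ∑ u : U, f (g * u) * ((χ u)⁻¹ : ℂˣ) = 0 := by
        intro χ hχ
        obtain ⟨t, ht, hteq⟩ := htrans ψ χ hψ hχ
        -- reindex u ↦ t * u * t⁻¹
        have conjmem : ∀ u : U, t * (u : G) * t⁻¹ ∈ U := fun u => by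
          have := hconj t⁻¹ (inv_mem ht) u u.2
          simpa using this
        let eqv : U ≃ U :=
          { toFun := fun u => ⟨t * u * t⁻¹, conjmem u⟩
            invFun := fun u => ⟨t⁻¹ * u * t, hconj t ht u u.2⟩
            left_inv := fun u => by ext; simp [mul_assoc]
            right_inv := fun u => by ext; simp [mul_assoc] }
        have reindex : ∑ u : U, f (g * u) * ((χ u)⁻¹ : ℂˣ)
            = ∑ u : U, f (g * t * u) * ((ψ u)⁻¹ : ℂˣ) := by
          refine Fintype.sum_equiv eqv.symm _ _ fun u => ?_
          have h1 : χ u = ψ (eqv.symm u) := hteq u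
          have h2 : f (g * u) = f (g * t * (eqv.symm u : G)) := by
            have hx : g * t * ((eqv.symm u : U) : G) = g * u * t := by
              show g * t * (t⁻¹ * u * t) = g * u * t
              group
            rw [hx]
            exact (hf (g * u) t ht).symm
          rw [h1, h2]
        rw [reindex]
        exact h (g * t)
      have := aux_const_of_char_sums (fun u : U => f (g * u)) hchar v
      simpa using this
    obtain ⟨t, ht, u, hu, rfl⟩ := hBTU b hb
    calc f (g * (t * u)) = f (g * t * u) := by rw [mul_assoc]
      _ = f (g * t) := claim (g * t) ⟨u, hu⟩
      _ = f g := hf g t ht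
  · intro h g
    have : ∀ u : U, f (g * u) = f g := fun u => h g u (hUB u.2)
    simp_rw [this]
    rw [← Finset.mul_sum]
    convert mul_zero (f g)
    letI : CommGroup U :=
      { (inferInstance : Group U) with
        mul_comm := fun a b => Subtype.ext (hUab a a.2 b b.2) }
    let f₀ : U →* ℂ :=
      { toFun := fun u => (((ψ u)⁻¹ : ℂˣ) : ℂ)
        map_one' := by simp
        map_mul' := fun u v => by simp [mul_comm] }
    have hf₀ : f₀ ≠ 1 := by
      intro heq
      apply hψ
      ext u
      have : f₀ u = 1 := by rw [heq]; rfl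
      have : ((ψ u)⁻¹ : ℂˣ) = 1 := Units.ext this
      simpa [inv_eq_one] using this
    exact sum_hom_units_eq_zero f₀ hf₀
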